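/- arXiv:2105.00922 — 4 statements merged into one kernel-verified Lean document; each statement's English description precedes it below -/
import Mathlib

section
/- Let R₊, T ∈ ℂ with |R₊|² + |T|² = 1, and let W₊, W₋ ∈ ℂ. Define, for η ∈ ℝ, R⁰(η) = R₊ - 2i·W₊²/(4η + i(|W₊|² + |W₋|²)) and T⁰(η) = T - 2i·W₊·W₋/(4η + i(|W₊|² + |W₋|²)). If W₊ = conj(W₊)·R₊ + conj(W₋)·T and W₋ = conj(W₊)·T + conj(W₋)·R₋ where R₋ ∈ ℂ satisfies conj(R₊)·T + conj(T)·R₋ = 0 and |R₋|² + |T|² = 1, then for every η ∈ ℝ, |R⁰(η)|² + |T⁰(η)|² = 1. -/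
/-!
Write `S = ‖W₊‖² + ‖W₋‖²` and `c = 2i / (4η + iS)`, so that `(R⁰, T⁰) = (R₊, T) - c • W₊ • (W₊, W₋)`.
Expanding the norm, the cross term is governed by `conj W₊² R₊ + conj (W₊ W₋) T = conj W₊ · W₊ = ‖W₊‖²`
(the relation for `W₊`), and the quadratic term by `‖c‖² ‖W₊‖² S`. These cancel because of the
Lorentzian identity `2 Re c = ‖c‖² S`, which also holds (as `0 = 0`) when the denominator vanishes.
-/

open Complex ComplexConjugate

lemma norm_sub_mul_sq_add_norm_sub_mul_sq (x y a b c : ℂ) :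
    ‖x - c * a‖ ^ 2 + ‖y - c * b‖ ^ 2 =
      ‖x‖ ^ 2 + ‖y‖ ^ 2 - 2 * (conj c * (conj a * x + conj b * y)).re
        + ‖c‖ ^ 2 * (‖a‖ ^ 2 + ‖b‖ ^ 2) := by
  simp only [Complex.sq_norm, normSq_sub, map_mul, mul_add, add_re]
  ring_nf

lemma two_mul_re_two_I_div (η S : ℝ) :
    2 * (2 * I / (4 * η + I * S)).re = ‖2 * I / (4 * η + I * S)‖ ^ 2 * S := by
  rw [Complex.sq_norm, normSq_div, div_re]
  simp only [normSq_apply, mul_re, mul_im, add_re, add_im, re_ofNat, im_ofNat, I_re, I_im,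
    ofReal_re, ofReal_im]
  ring

theorem stmt_2_general (Rp T Wp Wm : ℂ)
    (h1 : ‖Rp‖ ^ 2 + ‖T‖ ^ 2 = 1)
    (hWp : Wp = (starRingEnd ℂ) Wp * Rp + (starRingEnd ℂ) Wm * T) :
    ∀ η : ℝ,
      ‖Rp - 2 * Complex.I * Wp ^ 2 /
        ((4 * η : ℂ) + Complex.I * ((‖Wp‖ ^ 2 + ‖Wm‖ ^ 2 : ℝ) : ℂ))‖ ^ 2 +
      ‖T - 2 * Complex.I * Wp * Wm /
        ((4 * η : ℂ) + Complex.I * ((‖Wp‖ ^ 2 + ‖Wm‖ ^ 2 : ℝ) : ℂ))‖ ^ 2 = 1 := by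
  intro η
  set S : ℝ := ‖Wp‖ ^ 2 + ‖Wm‖ ^ 2
  set c : ℂ := 2 * I / (4 * η + I * S)
  have hR : 2 * I * Wp ^ 2 / (4 * η + I * S) = c * Wp ^ 2 := by ring
  have hT : 2 * I * Wp * Wm / (4 * η + I * S) = c * (Wp * Wm) := by ring
  have hproj : conj (Wp ^ 2) * Rp + conj (Wp * Wm) * T = (‖Wp‖ ^ 2 : ℝ) := by
    rw [ofReal_pow, ← mul_conj', map_pow, map_mul]
    linear_combination (-conj Wp) * hWp
  have hnorms : ‖Wp ^ 2‖ ^ 2 + ‖Wp * Wm‖ ^ 2 = ‖Wp‖ ^ 2 * S := by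
    simp only [S, norm_pow, norm_mul]
    ring
  rw [hR, hT, norm_sub_mul_sq_add_norm_sub_mul_sq, h1, hproj, hnorms, re_mul_ofReal, conj_re]
  linear_combination (-‖Wp‖ ^ 2) * two_mul_re_two_I_div η S

theorem stmt_2 (Rp Rm T Wp Wm : ℂ)
    (h1 : ‖Rp‖ ^ 2 + ‖T‖ ^ 2 = 1)
    (h2 : ‖Rm‖ ^ 2 + ‖T‖ ^ 2 = 1)
    (hRel : (starRingEnd ℂ) Rp * T + (starRingEnd ℂ) T * Rm = 0)
    (hWp : Wp = (starRingEnd ℂ) Wp * Rp + (starRingEnd ℂ) Wm * T)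
    (hWm : Wm = (starRingEnd ℂ) Wp * T + (starRingEnd ℂ) Wm * Rm) :
    ∀ η : ℝ,
      ‖Rp - 2 * Complex.I * Wp ^ 2 /
        ((4 * η : ℂ) + Complex.I * ((‖Wp‖ ^ 2 + ‖Wm‖ ^ 2 : ℝ) : ℂ))‖ ^ 2 +
      ‖T - 2 * Complex.I * Wp * Wm /
        ((4 * η : ℂ) + Complex.I * ((‖Wp‖ ^ 2 + ‖Wm‖ ^ 2 : ℝ) : ℂ))‖ ^ 2 = 1 :=
  stmt_2_general Rp T Wp Wm h1 hWp
end

section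
/- Let W₊ ∈ ℂ with W₊ ≠ 0 and R₊ ∈ ℂ with R₊ ≠ 0, and W₋ ∈ ℂ. There exists η ∈ ℝ such that R₊ - 2i·W₊²/(4η + i(|W₊|² + |W₋|²)) = 0 if and only if |W₊|² + |W₋|² = 2·Re(W₊²/R₊). -/
/-! As η ranges over ℝ, the denominator 4η + i(|W₊|² + |W₋|²) sweeps the horizontal line
Im = |W₊|² + |W₋|², and the equation pins it to 2iW₊²/R₊, whose imaginary part is
2 Re(W₊²/R₊). -/

open Complex

theorem sub_div_eq_zero_iff_eq_div {R c D : ℂ} (hc : c ≠ 0) (hD : D ≠ 0) :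
    R - c / D = 0 ↔ R ≠ 0 ∧ D = c / R := by
  rw [sub_eq_zero]
  constructor
  · rintro rfl
    exact ⟨div_ne_zero hc hD, (div_div_cancel₀ hc).symm⟩
  · rintro ⟨-, rfl⟩
    exact (div_div_cancel₀ hc).symm

theorem exists_ofReal_mul_add_I_mul_eq_iff {c : ℝ} (hc : c ≠ 0) (A : ℝ) (z : ℂ) :
    (∃ η : ℝ, (c : ℂ) * η + I * A = z) ↔ A = z.im := by
  constructor
  · rintro ⟨η, rfl⟩
    simp
  · intro hA
    refine ⟨z.re / c, Complex.ext ?_ ?_⟩ <;> simp [hA, mul_div_cancel₀ _ hc]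

theorem im_two_mul_I_mul_div (w R : ℂ) : (2 * I * w / R).im = 2 * (w / R).re := by
  rw [mul_div_assoc]
  simp

theorem stmt_3_general (Rp Wp Wm : ℂ) (hWp : Wp ≠ 0) :
    (∃ η : ℝ, Rp - 2 * Complex.I * Wp ^ 2 /
        ((4 * η : ℂ) + Complex.I * ((‖Wp‖ ^ 2 + ‖Wm‖ ^ 2 : ℝ) : ℂ)) = 0) ↔
    ‖Wp‖ ^ 2 + ‖Wm‖ ^ 2 = 2 * (Wp ^ 2 / Rp).re := by
  set A : ℝ := ‖Wp‖ ^ 2 + ‖Wm‖ ^ 2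
  have hA : A ≠ 0 := by positivity
  have hD (η : ℝ) : (4 * η : ℂ) + I * A ≠ 0 := fun h => hA (by simpa using congrArg im h)
  have hc : 2 * I * Wp ^ 2 ≠ 0 := by simp [hWp]
  calc (∃ η : ℝ, Rp - 2 * I * Wp ^ 2 / ((4 * η : ℂ) + I * A) = 0)
      ↔ ∃ η : ℝ, Rp ≠ 0 ∧ (4 * η : ℂ) + I * A = 2 * I * Wp ^ 2 / Rp :=
        exists_congr fun η => sub_div_eq_zero_iff_eq_div hc (hD η)
    _ ↔ Rp ≠ 0 ∧ A = 2 * (Wp ^ 2 / Rp).re := by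
        rw [exists_and_left, ← im_two_mul_I_mul_div,
          ← exists_ofReal_mul_add_I_mul_eq_iff (c := 4) four_ne_zero]
        norm_num
    _ ↔ A = 2 * (Wp ^ 2 / Rp).re := by
        -- at `Rp = 0` the right side reads `A = 0`, because `x / 0 = 0`
        refine and_iff_right_of_imp fun h hR => hA ?_
        simpa [hR] using h

theorem stmt_3 (Rp Wp Wm : ℂ) (hWp : Wp ≠ 0) (hRp : Rp ≠ 0) :
    (∃ η : ℝ, Rp - 2 * Complex.I * Wp ^ 2 /
        ((4 * η : ℂ) + Complex.I * ((‖Wp‖ ^ 2 + ‖Wm‖ ^ 2 : ℝ) : ℂ)) = 0) ↔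
    ‖Wp‖ ^ 2 + ‖Wm‖ ^ 2 = 2 * (Wp ^ 2 / Rp).re :=
  stmt_3_general Rp Wp Wm hWp
end

section
/- For θ₁ ∈ (π/2, 3π/2) with θ₁ ≠ π, set R = -cos(θ₁)e^{iθ₁}, T = 1 + R, and p such that e^{2iωp} = e^{-2iθ₁}. Then (1 + R·e^{2iωp})/(e^{2iωp} + R·e^{2iωp}) = -1, and consequently T + R = 1 - 2cos(θ₁)e^{iθ₁} = e^{i(2θ₁ - π)}. -/
/-!
Write `z = e^{iθ₁}`. Since `2 cos θ₁ · z = z² + 1`, we have `2R = -(z² + 1)`, so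
`T + R = 1 + 2R = -z² = e^{i(2θ₁ - π)}`, and with `e = e^{2iωp} = z⁻²` the numerator and the
denominator of the ratio add up to `1 + e + 2Re = 1 - e z² = 0`. The denominator `e(1 + R)` equals
`e(1 - z²)/2`, which is nonzero because `sin θ₁ ≠ 0` on `(π/2, 3π/2) \ {π}`.
-/

open Complex

lemma Complex.two_mul_cos_mul_exp_I_mul (x : ℂ) :
    2 * cos x * exp (I * x) = exp (I * x) ^ 2 + 1 := by
  rw [two_cos, add_mul, ← exp_add, ← exp_add, sq, ← exp_add, ← exp_zero]
  ring_nf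

lemma Complex.exp_I_mul_sub_pi (x : ℂ) : exp (I * (x - Real.pi)) = -exp (I * x) := by
  rw [← exp_sub_pi_mul_I]
  ring_nf

lemma Complex.exp_I_mul_ofReal_sq_ne_one {x : ℝ} (hx : Real.sin x ≠ 0) :
    exp (I * x) ^ 2 ≠ 1 := by
  intro h
  have hz : exp (I * x) = 1 ∨ exp (I * x) = -1 := mul_self_eq_one_iff.mp (by rw [← sq, h])
  apply hx
  rw [← exp_ofReal_mul_I_im, mul_comm]
  rcases hz with hz | hz <;> simp [hz]

lemma Real.sin_ne_zero_of_mem_Ioo_of_ne_pi {x : ℝ}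
    (hx : x ∈ Set.Ioo (Real.pi / 2) (3 * Real.pi / 2)) (hxπ : x ≠ Real.pi) : Real.sin x ≠ 0 := by
  rw [← sub_add_cancel x Real.pi, Real.sin_add_pi, neg_ne_zero]
  obtain ⟨hlo, hhi⟩ := hx
  rw [Ne, Real.sin_eq_zero_iff_of_lt_of_lt (by linarith [Real.pi_pos]) (by linarith), sub_eq_zero]
  exact hxπ

lemma one_add_mul_div_add_mul_eq_neg_one {K : Type*} [Field K] {w e R : K} (hw : w ≠ 1)
    (hR : 2 * R = -(w + 1)) (he : e * w = 1) : (1 + R * e) / (e + R * e) = -1 := by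
  have he0 : e ≠ 0 := left_ne_zero_of_mul_eq_one he
  have hden : e + R * e ≠ 0 := by
    have : 2 * (e + R * e) = e * (1 - w) := by linear_combination e * hR
    intro h
    rw [h, mul_zero, eq_comm] at this
    exact mul_ne_zero he0 (sub_ne_zero.mpr hw.symm) this
  rw [div_eq_iff hden]
  linear_combination e * hR - he

theorem stmt_10_general (θ₁ ω p : ℝ) (hθ : θ₁ ∈ Set.Ioo (Real.pi/2) (3*Real.pi/2))
    (hθπ : θ₁ ≠ Real.pi)
    (R T : ℂ) (hR : R = -(Real.cos θ₁ : ℂ) * Complex.exp (Complex.I * θ₁))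
    (hT : T = 1 + R)
    (hp : Complex.exp (2 * Complex.I * ω * p) = Complex.exp (-(2 * Complex.I * θ₁))) :
    (1 + R * Complex.exp (2 * Complex.I * ω * p)) /
      (Complex.exp (2 * Complex.I * ω * p) + R * Complex.exp (2 * Complex.I * ω * p)) = -1 ∧
    T + R = 1 - 2 * (Real.cos θ₁ : ℂ) * Complex.exp (Complex.I * θ₁) ∧
    T + R = Complex.exp (Complex.I * (2 * θ₁ - Real.pi)) := by
  have h2R : 2 * R = -(exp (I * θ₁) ^ 2 + 1) := by
    rw [hR, ← two_mul_cos_mul_exp_I_mul, ofReal_cos]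
    ring
  have hpz : exp (2 * I * ω * p) * exp (I * θ₁) ^ 2 = 1 := by
    rw [hp, ← exp_nat_mul, ← exp_add, ← exp_zero]
    ring_nf
  have hsum : T + R = 1 - 2 * (Real.cos θ₁ : ℂ) * exp (I * θ₁) := by
    rw [hT, hR]
    ring
  refine ⟨one_add_mul_div_add_mul_eq_neg_one (exp_I_mul_ofReal_sq_ne_one
    (Real.sin_ne_zero_of_mem_Ioo_of_ne_pi hθ hθπ)) h2R hpz, hsum, ?_⟩
  have hsq : exp (I * (2 * θ₁)) = exp (I * θ₁) ^ 2 := by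
    rw [← exp_nat_mul]
    ring_nf
  rw [exp_I_mul_sub_pi, hsq, hT]
  linear_combination h2R

theorem stmt_10 (θ₁ ω p : ℝ) (hθ : θ₁ ∈ Set.Ioo (Real.pi/2) (3*Real.pi/2))
    (hθπ : θ₁ ≠ Real.pi) (hω : 0 < ω)
    (R T : ℂ) (hR : R = -(Real.cos θ₁ : ℂ) * Complex.exp (Complex.I * θ₁))
    (hT : T = 1 + R)
    (hp : Complex.exp (2 * Complex.I * ω * p) = Complex.exp (-(2 * Complex.I * θ₁))) :
    (1 + R * Complex.exp (2 * Complex.I * ω * p)) /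
      (Complex.exp (2 * Complex.I * ω * p) + R * Complex.exp (2 * Complex.I * ω * p)) = -1 ∧
    T + R = 1 - 2 * (Real.cos θ₁ : ℂ) * Complex.exp (Complex.I * θ₁) ∧
    T + R = Complex.exp (Complex.I * (2 * θ₁ - Real.pi)) :=
  stmt_10_general θ₁ ω p hθ hθπ R T hR hT hp
end

section
/- Let f : ℝ → ℝ be continuous, let p⋆ ∈ ℝ, s > 0, and suppose g : ℝ → ℝ is continuous with g(p⋆) = 0, g'(p⋆) ≠ 0 (g differentiable at p⋆ with nonzero derivative), g is π/ω-antiperiodic-free in the sense that g(p + nπ/ω) = g(p) for all n ∈ ℤ, and |f(p) - g(p)| ≤ C·e^{-c|p|} for all p ≤ p₀ with constants C, c > 0. Then for all sufficiently large n ∈ ℕ, f vanishes at some point of the interval [p⋆ - nπ/ω - s, p⋆ - nπ/ω + s]. -/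
/-!
Near its simple zero `p⋆` the periodic function `g` takes values of opposite signs at two points
`a < p⋆ < b` within distance `s`, and by periodicity at all their translates `a - nπ/ω`, `b - nπ/ω`.
Since `f - g → 0` at `-∞`, for large `n` the values of `f` at these translates have the same signs
as those of `g`, and the intermediate value theorem gives a zero of `f` between them.
-/

open Filter Function Set Topology

theorem exists_mem_Icc_eq_zero_of_mul_nonpos {f : ℝ → ℝ} {a b : ℝ} (hab : a ≤ b)
    (hf : ContinuousOn f (Icc a b)) (hsign : f a * f b ≤ 0) : ∃ p ∈ Icc a b, f p = 0 := by
  rcases mul_nonpos_iff.mp hsign with ⟨ha, hb⟩ | ⟨ha, hb⟩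
  · exact intermediate_value_Icc' hab hf ⟨hb, ha⟩
  · exact intermediate_value_Icc hab hf ⟨ha, hb⟩

theorem HasDerivAt.exists_mul_neg_of_ne_zero {g : ℝ → ℝ} {x d s : ℝ} (hderiv : HasDerivAt g d x)
    (hgx : g x = 0) (hd : d ≠ 0) (hs : 0 < s) :
    ∃ a ∈ Ioo (x - s) x, ∃ b ∈ Ioo x (x + s), g a * g b < 0 := by
  have hslope : ∀ᶠ y in 𝓝[≠] x, 0 < d * slope g x y :=
    (hasDerivAt_iff_tendsto_slope.mp hderiv).eventually
      ((continuous_const.mul continuous_id).continuousAt.eventually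
        (lt_mem_nhds (mul_self_pos.mpr hd)))
  have hslope_eq : ∀ y, slope g x y = g y / (y - x) := by
    intro y
    rw [slope_def_field, hgx, sub_zero]
  obtain ⟨a, ha, hda⟩ :=
    (Eventually.and (Ioo_mem_nhdsLT (sub_lt_self x hs)) (nhdsLT_le_nhdsNE x hslope)).exists
  obtain ⟨b, hb, hdb⟩ :=
    (Eventually.and (Ioo_mem_nhdsGT (lt_add_of_pos_right x hs)) (nhdsGT_le_nhdsNE x hslope)).exists
  rw [hslope_eq, mul_div_assoc', div_pos_iff] at hda hdb
  have hda' : d * g a < 0 := by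
    rcases hda with ⟨-, h⟩ | ⟨h, -⟩
    · linarith [ha.2]
    · exact h
  have hdb' : 0 < d * g b := by
    rcases hdb with ⟨h, -⟩ | ⟨-, h⟩
    · exact h
    · linarith [hb.1]
  refine ⟨a, ha, b, hb, ?_⟩
  nlinarith [mul_neg_of_neg_of_pos hda' hdb', mul_self_pos.mpr hd]

theorem tendsto_sub_atBot_of_abs_sub_le_exp {f g : ℝ → ℝ} {C c p₀ : ℝ} (hc : 0 < c)
    (hclose : ∀ p ≤ p₀, |f p - g p| ≤ C * Real.exp (-c * |p|)) :
    Tendsto (f - g) atBot (𝓝 0) := by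
  have hexp : Tendsto (fun p : ℝ => C * Real.exp (-c * |p|)) atBot (𝓝 0) := by
    simpa using (Real.tendsto_exp_atBot.comp
      (tendsto_abs_atBot_atTop.const_mul_atTop_of_neg (neg_lt_zero.mpr hc))).const_mul C
  refine squeeze_zero_norm' ?_ hexp
  filter_upwards [eventually_le_atBot p₀] with p hp
  exact hclose p hp

theorem tendsto_sub_nat_mul_atBot {T : ℝ} (hT : 0 < T) (a : ℝ) :
    Tendsto (fun n : ℕ => a - n * T) atTop atBot := by
  simp_rw [sub_eq_add_neg, ← neg_mul]
  exact tendsto_atBot_add_const_left _ a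
    ((tendsto_neg_atTop_atBot.comp tendsto_natCast_atTop_atTop).atBot_mul_const hT)

theorem Function.Periodic.tendsto_comp_sub_nat_mul {f g : ℝ → ℝ} {T : ℝ} (hg : Periodic g T)
    (hT : 0 < T) (hfg : Tendsto (f - g) atBot (𝓝 0)) (a : ℝ) :
    Tendsto (fun n : ℕ => f (a - n * T)) atTop (𝓝 (g a)) := by
  have h := (hfg.comp (tendsto_sub_nat_mul_atBot hT a)).add_const (g a)
  simp only [zero_add] at h
  refine h.congr fun n => ?_
  simp [hg.sub_nat_mul_eq]

theorem Function.Periodic.eventually_exists_zero_Icc_sub_nat_mul {f g : ℝ → ℝ} {T a b : ℝ}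
    (hg : Periodic g T) (hT : 0 < T) (hf : Continuous f) (hab : a ≤ b) (hsign : g a * g b < 0)
    (hfg : Tendsto (f - g) atBot (𝓝 0)) :
    ∀ᶠ n : ℕ in atTop, ∃ p ∈ Icc (a - n * T) (b - n * T), f p = 0 := by
  have hprod := (hg.tendsto_comp_sub_nat_mul hT hfg a).mul (hg.tendsto_comp_sub_nat_mul hT hfg b)
  filter_upwards [hprod.eventually (gt_mem_nhds hsign)] with n hn
  exact exists_mem_Icc_eq_zero_of_mul_nonpos (by linarith) hf.continuousOn hn.le

theorem stmt_19_general (ω : ℝ) (hω : 0 < ω) (f g : ℝ → ℝ) (hf : Continuous f)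
    (pstar : ℝ) (s : ℝ) (hs : 0 < s)
    (hgz : g pstar = 0) (d : ℝ) (hd : d ≠ 0) (hderiv : HasDerivAt g d pstar)
    (hper : ∀ (p : ℝ) (n : ℤ), g (p + n * Real.pi / ω) = g p)
    (C c p₀ : ℝ) (hc : 0 < c)
    (hclose : ∀ p ≤ p₀, |f p - g p| ≤ C * Real.exp (-c * |p|)) :
    ∃ N : ℕ, ∀ n : ℕ, N ≤ n →
      ∃ p ∈ Set.Icc (pstar - n * Real.pi / ω - s) (pstar - n * Real.pi / ω + s), f p = 0 := by
  have hperiodic : Periodic g (Real.pi / ω) := fun p => by simpa using hper p 1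
  obtain ⟨a, ha, b, hb, hsign⟩ := hderiv.exists_mul_neg_of_ne_zero hgz hd hs
  obtain ⟨N, hN⟩ := eventually_atTop.mp <|
    hperiodic.eventually_exists_zero_Icc_sub_nat_mul (div_pos Real.pi_pos hω) hf
      (ha.2.trans hb.1).le hsign (tendsto_sub_atBot_of_abs_sub_le_exp hc hclose)
  refine ⟨N, fun n hn => ?_⟩
  obtain ⟨p, hp, hfp⟩ := hN n hn
  refine ⟨p, Icc_subset_Icc ?_ ?_ hp, hfp⟩ <;> rw [mul_div_assoc]
  · linarith [ha.1]
  · linarith [hb.2]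

theorem stmt_19 (ω : ℝ) (hω : 0 < ω) (f g : ℝ → ℝ) (hf : Continuous f) (hg : Continuous g)
    (pstar : ℝ) (s : ℝ) (hs : 0 < s)
    (hgz : g pstar = 0) (d : ℝ) (hd : d ≠ 0) (hderiv : HasDerivAt g d pstar)
    (hper : ∀ (p : ℝ) (n : ℤ), g (p + n * Real.pi / ω) = g p)
    (C c p₀ : ℝ) (hC : 0 < C) (hc : 0 < c)
    (hclose : ∀ p ≤ p₀, |f p - g p| ≤ C * Real.exp (-c * |p|)) :
    ∃ N : ℕ, ∀ n : ℕ, N ≤ n →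
      ∃ p ∈ Set.Icc (pstar - n * Real.pi / ω - s) (pstar - n * Real.pi / ω + s), f p = 0 :=
  stmt_19_general ω hω f g hf pstar s hs hgz d hd hderiv hper C c p₀ hc hclose
end
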